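/- arXiv:1910.01233 — 2 statements merged into one kernel-verified Lean document; each statement's English description precedes it below -/
import Mathlib

section
/- If U = [[U₁₁, U₁₂],[U₂₁, U₂₂]] is a block unitary matrix with square diagonal blocks of sizes n and m, then the nonzero singular values of U₁₂ coincide with those of U₂₁, and σᵢ(U₁₁)² + σ_{n+1−i}(U₁₂)² = 1 for all appropriate indices; in particular ‖U₁₂‖² = 1 − σ_min(U₁₁)². -/
open Matrix

/-- Operator (spectral) norm of a complex matrix: the norm of the induced map
between Euclidean spaces. -/
noncomputable def opNorm {m n : ℕ} (A : Matrix (Fin m) (Fin n) ℂ) : ℝ :=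
  ‖LinearMap.toContinuousLinearMap (Matrix.toEuclideanLin A)‖

/-- Singular values of a square complex matrix sorted decreasingly:
square roots of the eigenvalues of `Aᴴ * A`, sorted with `≥`. -/
noncomputable def sortedSingularValues {n : ℕ} (A : Matrix (Fin n) (Fin n) ℂ) : Fin n → ℝ :=
  fun i =>
    ((Finset.univ.val.map fun j =>
        Real.sqrt ((Matrix.isHermitian_conjTranspose_mul_self A).eigenvalues j)).sort (· ≥ ·)).get
      ⟨i, by simp⟩

/-- Singular values of a rectangular complex matrix, indexed by rows and sorted
decreasingly: square roots of the eigenvalues of `A * Aᴴ`. -/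
noncomputable def sortedSingularValuesRect {m n : ℕ} (A : Matrix (Fin m) (Fin n) ℂ) : Fin m → ℝ :=
  fun i =>
    ((Finset.univ.val.map fun j =>
        Real.sqrt ((Matrix.isHermitian_mul_conjTranspose_self A).eigenvalues j)).sort (· ≥ ·)).get
      ⟨i, by simp⟩

/-- Multiset of singular values of a rectangular complex matrix (square roots
of the eigenvalues of `A * Aᴴ`). -/
noncomputable def singularValueMultiset {m n : ℕ} (A : Matrix (Fin m) (Fin n) ℂ) : Multiset ℝ :=
  Finset.univ.val.map fun j =>
    Real.sqrt ((Matrix.isHermitian_mul_conjTranspose_self A).eigenvalues j)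

/-! The unitarity relations `U₁₁ U₁₁ᴴ + U₁₂ U₁₂ᴴ = 1`, `U₂₁ U₂₁ᴴ + U₂₂ U₂₂ᴴ = 1` and
`U₁₂ᴴ U₁₂ + U₂₂ᴴ U₂₂ = 1` say that the two positive semidefinite summands have eigenvalues `λ`
and `1 - λ`. Since `X Y` and `Y X` have the same nonzero eigenvalues (and the same eigenvalues when
square), the spectrum of `U₁₂ U₁₂ᴴ` is `1 -` that of `U₁₁ᴴ U₁₁`, which reverses the decreasing
order, and `U₁₂ᴴ U₁₂`, `U₂₁ U₂₁ᴴ` both have the spectrum `1 -` that of `U₂₂ U₂₂ᴴ`. The operator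
norm of `U₁₂` is its largest singular value, paired in this way with the smallest one of `U₁₁`. -/

namespace Multiset

variable {α β : Type*} [LinearOrder α] [LinearOrder β]

lemma sort_ge_eq_of_pairwise {s : Multiset α} {l : List α} (hl : l.Pairwise (· ≥ ·))
    (hs : (l : Multiset α) = s) : s.sort (· ≥ ·) = l :=
  List.Perm.eq_of_pairwise' (pairwise_sort s _) hl (coe_eq_coe.mp (by rw [sort_eq, hs]))

lemma sort_ge_map_of_monotone (s : Multiset α) {f : α → β} (hf : Monotone f) :
    (s.map f).sort (· ≥ ·) = (s.sort (· ≥ ·)).map f :=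
  sort_ge_eq_of_pairwise ((pairwise_sort s _).map f fun _ _ h => hf h)
    (by rw [← map_coe, sort_eq])

lemma sort_ge_map_of_antitone (s : Multiset α) {f : α → β} (hf : Antitone f) :
    (s.map f).sort (· ≥ ·) = ((s.sort (· ≥ ·)).map f).reverse :=
  sort_ge_eq_of_pairwise
    (List.pairwise_reverse.mpr ((pairwise_sort s _).map f fun _ _ h => hf h))
    (by rw [← coe_reverse, List.reverse_reverse, ← map_coe, sort_eq])

lemma getElem_sort_ge_zero_of_isGreatest {s : Multiset α} {a : α} (ha : IsGreatest {x | x ∈ s} a)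
    (h : 0 < (s.sort (· ≥ ·)).length) : (s.sort (· ≥ ·))[0] = a := by
  refine le_antisymm (ha.2 ((mem_sort ..).mp (List.getElem_mem h))) ?_
  obtain ⟨j, hj, rfl⟩ := List.getElem_of_mem ((mem_sort (α := α) (· ≥ ·)).mpr ha.1)
  exact List.sortedGE_iff_getElem_ge_getElem_of_le.mp
    (List.sortedGE_iff_pairwise.mpr (pairwise_sort s _)) (Nat.zero_le j)

lemma filter_ne_zero_map_ofReal (s : Multiset ℝ) :
    (s.map ((↑) : ℝ → ℂ)).filter (· ≠ 0) = (s.filter (· ≠ 0)).map (↑) := by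
  rw [filter_map]
  simp

lemma filter_ne_zero_map_sqrt {s : Multiset ℝ} (hs : ∀ x ∈ s, 0 ≤ x) :
    (s.map Real.sqrt).filter (· ≠ 0) = (s.filter (· ≠ 0)).map Real.sqrt := by
  rw [filter_map]
  congr 1
  exact filter_congr fun x hx => by simp [Real.sqrt_eq_zero (hs x hx)]

end Multiset

lemma Polynomial.filter_ne_zero_roots_X_pow_mul {R : Type*} [CommRing R] [IsDomain R]
    [DecidableEq R] {p : Polynomial R} (hp : p ≠ 0) (a : ℕ) :
    ((X ^ a * p).roots).filter (· ≠ 0) = p.roots.filter (· ≠ 0) := by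
  rw [roots_mul (mul_ne_zero (pow_ne_zero _ X_ne_zero) hp), roots_X_pow, Multiset.filter_add]
  simp

namespace Matrix

open Polynomial
open scoped ComplexOrder

variable {k l : Type*} [Fintype k] [DecidableEq k] [Fintype l] [DecidableEq l]

lemma gram_relations_of_fromBlocks_mem_unitaryGroup {A : Matrix k k ℂ} {B : Matrix k l ℂ}
    {C : Matrix l k ℂ} {D : Matrix l l ℂ} (h : fromBlocks A B C D ∈ unitaryGroup (k ⊕ l) ℂ) :
    A * Aᴴ + B * Bᴴ = 1 ∧ C * Cᴴ + D * Dᴴ = 1 ∧ Aᴴ * A + Cᴴ * C = 1 ∧ Bᴴ * B + Dᴴ * D = 1 := by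
  have hrow := mem_unitaryGroup_iff.mp h
  have hcol := mem_unitaryGroup_iff'.mp h
  rw [star_eq_conjTranspose, fromBlocks_conjTranspose, fromBlocks_multiply, ← fromBlocks_one,
    fromBlocks_inj] at hrow hcol
  exact ⟨hrow.1, hrow.2.2.2, hcol.1, hcol.2.2.2⟩

namespace IsHermitian

noncomputable def eigenvalueMultiset {M : Matrix k k ℂ} (hM : M.IsHermitian) : Multiset ℝ :=
  Finset.univ.val.map hM.eigenvalues

lemma mem_eigenvalueMultiset {M : Matrix k k ℂ} (hM : M.IsHermitian) {x : ℝ} :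
    x ∈ hM.eigenvalueMultiset ↔ x ∈ Set.range hM.eigenvalues := by
  simp [eigenvalueMultiset]

lemma card_eigenvalueMultiset {M : Matrix k k ℂ} (hM : M.IsHermitian) :
    hM.eigenvalueMultiset.card = Fintype.card k := by
  simp [eigenvalueMultiset]

lemma map_ofReal_eigenvalueMultiset {M : Matrix k k ℂ} (hM : M.IsHermitian) :
    hM.eigenvalueMultiset.map (↑) = M.charpoly.roots := by
  rw [hM.roots_charpoly_eq_eigenvalues, eigenvalueMultiset, Multiset.map_map]
  rfl

lemma eigenvalueMultiset_eq_of_charpoly_eq {M : Matrix k k ℂ} {N : Matrix l l ℂ}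
    (hM : M.IsHermitian) (hN : N.IsHermitian) (h : M.charpoly = N.charpoly) :
    hM.eigenvalueMultiset = hN.eigenvalueMultiset :=
  Multiset.map_injective Complex.ofReal_injective <| by
    rw [map_ofReal_eigenvalueMultiset, map_ofReal_eigenvalueMultiset, h]

lemma eigenvalueMultiset_mul_comm {A B : Matrix k k ℂ} (hAB : (A * B).IsHermitian)
    (hBA : (B * A).IsHermitian) : hAB.eigenvalueMultiset = hBA.eigenvalueMultiset :=
  eigenvalueMultiset_eq_of_charpoly_eq hAB hBA (charpoly_mul_comm A B)

lemma filter_ne_zero_eigenvalueMultiset_mul_comm {A : Matrix k l ℂ} {B : Matrix l k ℂ}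
    (hAB : (A * B).IsHermitian) (hBA : (B * A).IsHermitian) :
    hAB.eigenvalueMultiset.filter (· ≠ 0) = hBA.eigenvalueMultiset.filter (· ≠ 0) := by
  apply Multiset.map_injective Complex.ofReal_injective
  rw [← Multiset.filter_ne_zero_map_ofReal, ← Multiset.filter_ne_zero_map_ofReal,
    map_ofReal_eigenvalueMultiset, map_ofReal_eigenvalueMultiset,
    ← filter_ne_zero_roots_X_pow_mul (charpoly_monic _).ne_zero, charpoly_mul_comm',
    filter_ne_zero_roots_X_pow_mul (charpoly_monic _).ne_zero]

lemma eigenvalueMultiset_eq_map_one_sub_of_add_eq_one {M N : Matrix k k ℂ}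
    (hM : M.IsHermitian) (hN : N.IsHermitian) (h : M + N = 1) :
    hN.eigenvalueMultiset = hM.eigenvalueMultiset.map (1 - ·) := by
  apply Multiset.map_injective Complex.ofReal_injective
  have hN_cfc : N = cfc (fun x : ℝ => 1 - x) M := by
    rw [cfc_sub (fun _ : ℝ => 1) (fun x : ℝ => x) M, cfc_const_one ℝ M, cfc_id' ℝ M]
    exact eq_sub_of_add_eq' h
  rw [map_ofReal_eigenvalueMultiset, hN_cfc, hM.charpoly_cfc_eq,
    roots_prod _ _ (Finset.prod_ne_zero_iff.mpr fun _ _ => X_sub_C_ne_zero _)]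
  simp only [roots_X_sub_C, Multiset.bind_singleton, eigenvalueMultiset, Multiset.map_map]
  rfl

lemma sort_ge_map_sqrt_eigenvalues {M : Matrix k k ℂ} (hM : M.IsHermitian) :
    (Finset.univ.val.map fun j => √(hM.eigenvalues j)).sort (· ≥ ·) =
      (hM.eigenvalueMultiset.sort (· ≥ ·)).map Real.sqrt := by
  rw [← Multiset.sort_ge_map_of_monotone _ fun _ _ h => Real.sqrt_le_sqrt h, eigenvalueMultiset,
    Multiset.map_map]
  rfl

end IsHermitian

lemma PosSemidef.nonneg_of_mem_eigenvalueMultiset {M : Matrix k k ℂ} (hM : M.PosSemidef) {x : ℝ}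
    (hx : x ∈ hM.isHermitian.eigenvalueMultiset) : 0 ≤ x := by
  obtain ⟨i, rfl⟩ := hM.isHermitian.mem_eigenvalueMultiset.mp hx
  exact hM.eigenvalues_nonneg i

open scoped Matrix.Norms.L2Operator MatrixOrder in
lemma PosSemidef.isGreatest_eigenvalueMultiset_norm [Nonempty k] {M : Matrix k k ℂ}
    (hM : M.PosSemidef) : IsGreatest {x | x ∈ hM.isHermitian.eigenvalueMultiset} ‖M‖ := by
  simp_rw [hM.isHermitian.mem_eigenvalueMultiset, Set.ofPred_mem_eq,
    ← hM.isHermitian.spectrum_real_eq_range_eigenvalues]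
  exact ⟨CStarAlgebra.norm_mem_spectrum_of_nonneg hM.nonneg,
    fun x hx => (Real.le_norm_self x).trans (spectrum.norm_le_norm_of_mem hx)⟩

end Matrix

section SingularValues

open Matrix
open scoped ComplexOrder

variable {n m a b : ℕ}

lemma sortedSingularValues_eq (A : Matrix (Fin n) (Fin n) ℂ) (i : Fin n) :
    sortedSingularValues A i = √(((isHermitian_conjTranspose_mul_self A).eigenvalueMultiset.sort
      (· ≥ ·))[(i : ℕ)]'(by simp [IsHermitian.card_eigenvalueMultiset])) := by
  simp only [sortedSingularValues, List.get_eq_getElem,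
    IsHermitian.sort_ge_map_sqrt_eigenvalues, List.getElem_map]

lemma sortedSingularValuesRect_eq (A : Matrix (Fin a) (Fin b) ℂ) (i : Fin a) :
    sortedSingularValuesRect A i = √(((isHermitian_mul_conjTranspose_self A).eigenvalueMultiset.sort
      (· ≥ ·))[(i : ℕ)]'(by simp [IsHermitian.card_eigenvalueMultiset])) := by
  simp only [sortedSingularValuesRect, List.get_eq_getElem,
    IsHermitian.sort_ge_map_sqrt_eigenvalues, List.getElem_map]

lemma singularValueMultiset_eq (A : Matrix (Fin a) (Fin b) ℂ) :
    singularValueMultiset A =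
      (isHermitian_mul_conjTranspose_self A).eigenvalueMultiset.map Real.sqrt := by
  rw [singularValueMultiset, IsHermitian.eigenvalueMultiset, Multiset.map_map]
  rfl

open scoped Matrix.Norms.L2Operator in
lemma opNorm_sq_eq_norm_mul_conjTranspose (A : Matrix (Fin a) (Fin b) ℂ) :
    opNorm A ^ 2 = ‖A * Aᴴ‖ := by
  rw [show opNorm A = ‖A‖ from rfl, ← l2_opNorm_conjTranspose A, sq,
    ← l2_opNorm_conjTranspose_mul_self, conjTranspose_conjTranspose]

lemma opNorm_eq_sortedSingularValuesRect_zero (A : Matrix (Fin a) (Fin b) ℂ) (ha : 0 < a) :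
    opNorm A = sortedSingularValuesRect A ⟨0, ha⟩ := by
  have : Nonempty (Fin a) := ⟨⟨0, ha⟩⟩
  rw [sortedSingularValuesRect_eq, Multiset.getElem_sort_ge_zero_of_isGreatest
    (posSemidef_self_mul_conjTranspose A).isGreatest_eigenvalueMultiset_norm,
    ← opNorm_sq_eq_norm_mul_conjTranspose]
  exact (Real.sqrt_sq (norm_nonneg _)).symm

lemma sq_sortedSingularValues_add_sq_sortedSingularValuesRect_rev
    {A : Matrix (Fin n) (Fin n) ℂ} {B : Matrix (Fin n) (Fin m) ℂ} (h : A * Aᴴ + B * Bᴴ = 1)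
    (i : Fin n) : sortedSingularValues A i ^ 2 + sortedSingularValuesRect B i.rev ^ 2 = 1 := by
  set s := (isHermitian_conjTranspose_mul_self A).eigenvalueMultiset
  have hB : (isHermitian_mul_conjTranspose_self B).eigenvalueMultiset = s.map (1 - ·) := by
    rw [(isHermitian_mul_conjTranspose_self A).eigenvalueMultiset_eq_map_one_sub_of_add_eq_one _ h,
      IsHermitian.eigenvalueMultiset_mul_comm]
  have hs : ∀ x ∈ s, 0 ≤ x ∧ x ≤ 1 := fun x hx =>
    ⟨(posSemidef_conjTranspose_mul_self A).nonneg_of_mem_eigenvalueMultiset hx,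
      sub_nonneg.mp ((posSemidef_self_mul_conjTranspose B).nonneg_of_mem_eigenvalueMultiset
        (hB ▸ Multiset.mem_map_of_mem _ hx))⟩
  have hsort : (isHermitian_mul_conjTranspose_self B).eigenvalueMultiset.sort (· ≥ ·) =
      ((s.sort (· ≥ ·)).map (1 - ·)).reverse := by
    rw [hB, Multiset.sort_ge_map_of_antitone _ fun _ _ h => sub_le_sub_left h 1]
  have hlen : (s.sort (· ≥ ·)).length = n := by simp [s, IsHermitian.card_eigenvalueMultiset]
  have hx := hs _ ((Multiset.mem_sort ..).mp (List.getElem_mem (i.2.trans_eq hlen.symm)))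
  rw [sortedSingularValues_eq, sortedSingularValuesRect_eq]
  have hidx : n - 1 - (n - (i + 1)) = i := by omega
  simp only [hsort, List.getElem_reverse, List.getElem_map, List.length_map, hlen, Fin.val_rev,
    hidx]
  rw [Real.sq_sqrt hx.1, Real.sq_sqrt (sub_nonneg.mpr hx.2)]
  ring

lemma filter_ne_zero_singularValueMultiset_eq_of_add_eq_one
    {B : Matrix (Fin n) (Fin m) ℂ} {C : Matrix (Fin m) (Fin n) ℂ} {D : Matrix (Fin m) (Fin m) ℂ}
    (hBD : Bᴴ * B + Dᴴ * D = 1) (hCD : C * Cᴴ + D * Dᴴ = 1) :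
    (singularValueMultiset B).filter (· ≠ 0) = (singularValueMultiset C).filter (· ≠ 0) := by
  have hBC : (isHermitian_conjTranspose_mul_self B).eigenvalueMultiset =
      (isHermitian_mul_conjTranspose_self C).eigenvalueMultiset := by
    rw [(isHermitian_conjTranspose_mul_self D).eigenvalueMultiset_eq_map_one_sub_of_add_eq_one
        (isHermitian_conjTranspose_mul_self B) (by rwa [add_comm]),
      (isHermitian_mul_conjTranspose_self D).eigenvalueMultiset_eq_map_one_sub_of_add_eq_one
        (isHermitian_mul_conjTranspose_self C) (by rwa [add_comm]),
      IsHermitian.eigenvalueMultiset_mul_comm]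
  rw [singularValueMultiset_eq, singularValueMultiset_eq,
    Multiset.filter_ne_zero_map_sqrt
      fun _ => (posSemidef_self_mul_conjTranspose B).nonneg_of_mem_eigenvalueMultiset,
    Multiset.filter_ne_zero_map_sqrt
      fun _ => (posSemidef_self_mul_conjTranspose C).nonneg_of_mem_eigenvalueMultiset,
    IsHermitian.filter_ne_zero_eigenvalueMultiset_mul_comm _
      (isHermitian_conjTranspose_mul_self B), hBC]

end SingularValues

/-- For a block unitary matrix, the nonzero singular values of the two
off-diagonal blocks coincide, the singular values of `U₁₁` and `U₁₂` pair up as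
`σᵢ(U₁₁)² + σ_{n+1-i}(U₁₂)² = 1`, and `‖U₁₂‖² = 1 - σ_min(U₁₁)²`. -/
theorem block_unitary_singular_value_relations
    (n m : ℕ) (hn : 0 < n)
    (U : Matrix (Fin n ⊕ Fin m) (Fin n ⊕ Fin m) ℂ)
    (hU : U ∈ Matrix.unitaryGroup (Fin n ⊕ Fin m) ℂ) :
    (Multiset.filter (· ≠ 0) (singularValueMultiset U.toBlocks₁₂) =
        Multiset.filter (· ≠ 0) (singularValueMultiset U.toBlocks₂₁)) ∧
    (∀ i : Fin n,
        sortedSingularValues U.toBlocks₁₁ i ^ 2 +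
          sortedSingularValuesRect U.toBlocks₁₂ i.rev ^ 2 = 1) ∧
    opNorm U.toBlocks₁₂ ^ 2 = 1 - sortedSingularValues U.toBlocks₁₁ ⟨n - 1, by omega⟩ ^ 2 := by
  rw [← fromBlocks_toBlocks U] at hU
  obtain ⟨hrow₁, hrow₂, -, hcol₂⟩ := gram_relations_of_fromBlocks_mem_unitaryGroup hU
  have hpair := sq_sortedSingularValues_add_sq_sortedSingularValuesRect_rev hrow₁
  refine ⟨filter_ne_zero_singularValueMultiset_eq_of_add_eq_one hcol₂ hrow₂, hpair, ?_⟩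
  have hlast := hpair ⟨n - 1, by omega⟩
  have hrev : (⟨n - 1, by omega⟩ : Fin n).rev = ⟨0, hn⟩ := Fin.ext (by simp; omega)
  rw [hrev, ← opNorm_eq_sortedSingularValuesRect_zero _ hn] at hlast
  linarith
end

section
/- If A is a contraction with singular values σ₁ = ... = σ_r = 1 > σ_{r+1} ≥ ... ≥ σ_n, then there exist unitary matrices W and Q such that A = W · diag(1,...,1, σ_{r+1},...,σ_n) · Q†, and the minimal unitary dilation of A can be written as diag(W, W₂) · [[I_r ⊕ C, 0 ⊕ (−S)],[0 ⊕ S, C]] · diag(Q†, Q₂†) for suitable unitary W₂, Q₂, where C = diag(σ_{r+1},...,σ_n) and S = (I − C²)^{1/2}. -/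
/-!
The singular value decomposition `A = W Σ Qᴴ` comes from diagonalising `Aᴴ A` by a unitary `Q`
whose columns are ordered like the sorted singular values: the columns of `A Q` are then
orthogonal with norms `σᵢ`, and normalising the nonzero ones and extending them to an orthonormal
basis gives `W`.

For the dilation one may take `W₂ = Q₂ = 1`. Let `E` be the isometry onto the last `n - r`
coordinates. The middle factor `[[Σ, -E S], [S Eᴴ, C]]` is unitary because `Σ E = E C`,
`Eᴴ E = 1`, `C² + S² = 1`, and `Σ² + E S² Eᴴ = 1`; the last identity holds since `Σ = 1` off the
range of `E`.
-/

open Matrix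

theorem exists_perm_sort_ge_get {α : Type*} [LinearOrder α] {n : ℕ} (f : Fin n → α) :
    ∃ e : Equiv.Perm (Fin n), ∀ i : Fin n,
      ((Finset.univ.val.map f).sort (· ≥ ·)).get ⟨i, by simp⟩ = f (e i) := by
  set e : Equiv.Perm (Fin n) := Fin.revPerm.trans (Tuple.sort f)
  have hanti : Antitone (f ∘ e) := fun i j hij => Tuple.monotone_sort f (Fin.rev_le_rev.mpr hij)
  have hsort : (Finset.univ.val.map f).sort (· ≥ ·) = List.ofFn (f ∘ e) := by
    refine List.Perm.eq_of_pairwise' (Multiset.pairwise_sort _ _) hanti.sortedGE_ofFn.pairwise ?_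
    rw [← Multiset.coe_eq_coe, Multiset.sort_eq, ← Fin.univ_val_map, ← Multiset.map_map,
      Multiset.map_univ_val_equiv]
  exact ⟨e, fun i => by rw [List.get_of_eq hsort, List.get_ofFn]; rfl⟩

namespace Matrix

section Embedding

variable {α ι κ : Type*} [Semiring α] [DecidableEq ι] {φ : κ → ι}

variable (α) in
def embeddingMatrix (φ : κ → ι) : Matrix ι κ α := (1 : Matrix ι ι α).submatrix id φ

lemma embeddingMatrix_apply (i : ι) (k : κ) :
    embeddingMatrix α φ i k = if i = φ k then 1 else 0 :=
  one_apply

variable [DecidableEq κ]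

lemma diagonal_mul_embeddingMatrix [Fintype ι] [Fintype κ] (g : ι → α) :
    diagonal g * embeddingMatrix α φ = embeddingMatrix α φ * diagonal (fun k => g (φ k)) := by
  ext i k
  rw [diagonal_mul, mul_diagonal, embeddingMatrix_apply]
  split_ifs with h <;> simp [h]

variable [StarRing α]

lemma conjTranspose_embeddingMatrix_mul_diagonal [Fintype ι] [Fintype κ] (g : ι → α) :
    (embeddingMatrix α φ)ᴴ * diagonal g = diagonal (fun k => g (φ k)) * (embeddingMatrix α φ)ᴴ := by
  ext k i
  rw [diagonal_mul, mul_diagonal, conjTranspose_apply, embeddingMatrix_apply]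
  split_ifs with h <;> simp [h]

lemma conjTranspose_embeddingMatrix_mul_self [Fintype ι] (hφ : Function.Injective φ) :
    (embeddingMatrix α φ)ᴴ * embeddingMatrix α φ = 1 := by
  rw [embeddingMatrix, conjTranspose_submatrix, conjTranspose_one,
    ← submatrix_mul _ _ _ _ _ Function.bijective_id, one_mul, submatrix_one _ hφ]

lemma embeddingMatrix_mul_diagonal_mul_conjTranspose [Fintype κ] (hφ : Function.Injective φ)
    (f : ι → α) (hf : ∀ i ∉ Set.range φ, f i = 0) :
    embeddingMatrix α φ * diagonal (fun k => f (φ k)) * (embeddingMatrix α φ)ᴴ = diagonal f := by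
  ext i i'
  simp only [mul_apply, conjTranspose_apply, embeddingMatrix_apply, diagonal_apply]
  by_cases hi : i ∈ Set.range φ
  · obtain ⟨k, rfl⟩ := hi
    rw [Finset.sum_eq_single k (fun k' _ hk' => by simp [hφ.ne hk'.symm]) (by simp)]
    split_ifs <;> simp_all
  · have hne : ∀ k, i ≠ φ k := fun k h => hi ⟨k, h.symm⟩
    simp [hne, hf i hi]

end Embedding

section Blocks

variable {α ι κ : Type*} [Fintype ι] [Fintype κ]

lemma toBlocks₁₁_fromBlocks_mul_mul_fromBlocks [Semiring α] (W : Matrix ι ι α)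
    (W₂ : Matrix κ κ α) (M : Matrix (ι ⊕ κ) (ι ⊕ κ) α) (Q : Matrix ι ι α) (Q₂ : Matrix κ κ α) :
    (fromBlocks W 0 0 W₂ * M * fromBlocks Q 0 0 Q₂).toBlocks₁₁ = W * M.toBlocks₁₁ * Q := by
  conv_lhs => rw [← fromBlocks_toBlocks M]
  simp [fromBlocks_multiply]

lemma fromBlocks_zero_zero_mem_unitaryGroup [CommRing α] [StarRing α] [DecidableEq ι]
    [DecidableEq κ] {W : Matrix ι ι α} {V : Matrix κ κ α}
    (hW : W ∈ unitaryGroup ι α) (hV : V ∈ unitaryGroup κ α) :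
    fromBlocks W 0 0 V ∈ unitaryGroup (ι ⊕ κ) α := by
  rw [mem_unitaryGroup_iff'] at hW hV ⊢
  rw [star_eq_conjTranspose, fromBlocks_conjTranspose, fromBlocks_multiply]
  simp [← star_eq_conjTranspose, hW, hV]

end Blocks

variable {𝕜 ι κ : Type*} [RCLike 𝕜] [Fintype ι] [DecidableEq ι]

theorem fromBlocks_cs_mem_unitaryGroup [Fintype κ] [DecidableEq κ] {φ : κ → ι}
    (hφ : Function.Injective φ) (c : ι → ℝ) (s : κ → ℝ) (hc : ∀ i ∉ Set.range φ, c i = 1)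
    (hcs : ∀ k, c (φ k) ^ 2 + s k ^ 2 = 1) :
    fromBlocks (diagonal fun i => (c i : 𝕜)) (-(embeddingMatrix 𝕜 φ * diagonal fun k => (s k : 𝕜)))
      ((diagonal fun k => (s k : 𝕜)) * (embeddingMatrix 𝕜 φ)ᴴ) (diagonal fun k => (c (φ k) : 𝕜))
      ∈ unitaryGroup (ι ⊕ κ) 𝕜 := by
  set E := embeddingMatrix 𝕜 φ
  have hDE : (diagonal fun i => (c i : 𝕜)) * E = E * diagonal fun k => (c (φ k) : 𝕜) :=
    diagonal_mul_embeddingMatrix _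
  have hED : Eᴴ * (diagonal fun i => (c i : 𝕜)) = (diagonal fun k => (c (φ k) : 𝕜)) * Eᴴ :=
    conjTranspose_embeddingMatrix_mul_diagonal _
  have hSC : (diagonal fun k => (s k : 𝕜)) * (diagonal fun k => (c (φ k) : 𝕜)) =
      (diagonal fun k => (c (φ k) : 𝕜)) * (diagonal fun k => (s k : 𝕜)) := by
    simp only [diagonal_mul_diagonal, mul_comm]
  have hs : ∀ k, (s k : 𝕜) * s k = 1 - (c (φ k) : 𝕜) * c (φ k) := fun k => by
    have h := congrArg ((↑) : ℝ → 𝕜) (hcs k)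
    push_cast at h
    linear_combination h
  rw [mem_unitaryGroup_iff', star_eq_conjTranspose, fromBlocks_conjTranspose, fromBlocks_multiply,
    ← fromBlocks_one]
  simp only [conjTranspose_neg, conjTranspose_mul, conjTranspose_conjTranspose,
    diagonal_conjTranspose, Pi.star_def, RCLike.star_def, RCLike.conj_ofReal]
  congr 1
  · rw [diagonal_mul_diagonal, Matrix.mul_assoc, ← Matrix.mul_assoc (diagonal _),
      diagonal_mul_diagonal, funext hs, ← Matrix.mul_assoc,
      embeddingMatrix_mul_diagonal_mul_conjTranspose hφ (fun i => 1 - (c i : 𝕜) * c i)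
        (fun i hi => by simp [hc i hi]),
      diagonal_add, ← diagonal_one]
    congr 1
    ext i
    ring
  · rw [Matrix.mul_neg, ← Matrix.mul_assoc, hDE, Matrix.mul_assoc, Matrix.mul_assoc, hSC,
      neg_add_cancel]
  · rw [Matrix.neg_mul, Matrix.mul_assoc, hED, ← Matrix.mul_assoc, ← Matrix.mul_assoc, hSC,
      neg_add_cancel]
  · rw [Matrix.neg_mul, Matrix.mul_neg, neg_neg, Matrix.mul_assoc, ← Matrix.mul_assoc Eᴴ,
      conjTranspose_embeddingMatrix_mul_self hφ, Matrix.one_mul, diagonal_mul_diagonal,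
      diagonal_mul_diagonal, diagonal_add, ← diagonal_one]
    congr 1
    ext k
    rw [hs]
    ring

theorem IsHermitian.exists_mem_unitaryGroup_conj_eq_diagonal_comp {B : Matrix ι ι 𝕜}
    (hB : B.IsHermitian) (e : Equiv.Perm ι) :
    ∃ Q ∈ unitaryGroup ι 𝕜, Qᴴ * B * Q = diagonal fun i => (hB.eigenvalues (e i) : 𝕜) := by
  set U : Matrix ι ι 𝕜 := (hB.eigenvectorUnitary : Matrix ι ι 𝕜)
  have hUU : Uᴴ * U = 1 := mem_unitaryGroup_iff'.mp hB.eigenvectorUnitary.2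
  have hUBU : Uᴴ * B * U = diagonal (RCLike.ofReal ∘ hB.eigenvalues) := by
    simpa [star_eq_conjTranspose] using hB.conjStarAlgAut_star_eigenvectorUnitary
  have hconj (M : Matrix ι ι 𝕜) :
      (U.submatrix id e)ᴴ * M * U.submatrix id e = (Uᴴ * M * U).submatrix e e := by
    ext
    simp [mul_apply]
  refine ⟨U.submatrix id e, ?_, ?_⟩
  · rw [mem_unitaryGroup_iff', star_eq_conjTranspose, ← Matrix.mul_one (_ᴴ), hconj,
      Matrix.mul_one, hUU, submatrix_one_equiv]
  · rw [hconj, hUBU, submatrix_diagonal_equiv]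
    rfl

theorem exists_mem_unitaryGroup_eq_mul_diagonal (B : Matrix ι ι 𝕜) (σ : ι → ℝ)
    (hB : Bᴴ * B = diagonal fun i => (σ i : 𝕜) ^ 2) :
    ∃ W ∈ unitaryGroup ι 𝕜, B = W * diagonal fun i => (σ i : 𝕜) := by
  let col : ι → EuclideanSpace 𝕜 ι := fun j => WithLp.toLp 2 fun i => B i j
  have inner_col (i j : ι) : inner 𝕜 (col i) (col j) = if i = j then (σ i : 𝕜) ^ 2 else 0 := by
    calc inner 𝕜 (col i) (col j) = (Bᴴ * B) i j := by
          simp [col, EuclideanSpace.inner_toLp_toLp, mul_apply, dotProduct, mul_comm]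
      _ = _ := by rw [hB, diagonal_apply]
  have col_eq_zero (j : ι) (hj : σ j = 0) : col j = 0 := by
    rw [← inner_self_eq_zero (𝕜 := 𝕜), inner_col, if_pos rfl, hj]
    simp
  let v : ι → EuclideanSpace 𝕜 ι := fun j => (σ j : 𝕜)⁻¹ • col j
  have hv : Orthonormal 𝕜 ({j | σ j ≠ 0}.domRestrict v) := by
    rw [orthonormal_iff_ite]
    rintro ⟨i, hi⟩ ⟨j, hj⟩
    simp only [Set.domRestrict_apply, v, inner_smul_left, inner_smul_right, inner_col,
      Subtype.mk.injEq]
    split_ifs with h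
    · subst h
      have : (σ i : 𝕜) ≠ 0 := by exact_mod_cast hi
      simp only [map_inv₀, RCLike.conj_ofReal]
      field_simp
    · simp
  obtain ⟨b, hb⟩ := hv.exists_orthonormalBasis_extension_of_card_eq finrank_euclideanSpace
  refine ⟨(EuclideanSpace.basisFun ι 𝕜).toBasis.toMatrix b.toBasis,
    (EuclideanSpace.basisFun ι 𝕜).toMatrix_orthonormalBasis_mem_unitary b, ?_⟩
  ext i j
  rw [mul_diagonal]
  change B i j = b j i * σ j
  by_cases hj : σ j = 0
  · simpa [hj] using congr($(col_eq_zero j hj) i)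
  · have : (σ j : 𝕜) ≠ 0 := by exact_mod_cast hj
    rw [hb j hj]
    simp only [v, col, PiLp.smul_apply, smul_eq_mul]
    field_simp

theorem exists_mem_unitaryGroup_eq_mul_diagonal_mul_conjTranspose {A Q : Matrix ι ι 𝕜}
    (hQ : Q ∈ unitaryGroup ι 𝕜) (σ : ι → ℝ)
    (hAQ : Qᴴ * (Aᴴ * A) * Q = diagonal fun i => (σ i : 𝕜) ^ 2) :
    ∃ W ∈ unitaryGroup ι 𝕜, A = W * (diagonal fun i => (σ i : 𝕜)) * Qᴴ := by
  obtain ⟨W, hW, hAQW⟩ := exists_mem_unitaryGroup_eq_mul_diagonal (A * Q) σ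
    (by rw [conjTranspose_mul, ← hAQ]; simp only [Matrix.mul_assoc])
  refine ⟨W, hW, ?_⟩
  rw [← hAQW, Matrix.mul_assoc, ← star_eq_conjTranspose, mem_unitaryGroup_iff.mp hQ,
    Matrix.mul_one]

end Matrix

theorem exists_perm_sortedSingularValues_eq {n : ℕ} (A : Matrix (Fin n) (Fin n) ℂ) :
    ∃ e : Equiv.Perm (Fin n), ∀ i, sortedSingularValues A i =
      √((isHermitian_conjTranspose_mul_self A).eigenvalues (e i)) :=
  exists_perm_sort_ge_get _

theorem sortedSingularValues_nonneg {n : ℕ} (A : Matrix (Fin n) (Fin n) ℂ) (i : Fin n) :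
    0 ≤ sortedSingularValues A i := by
  obtain ⟨e, he⟩ := exists_perm_sortedSingularValues_eq A
  exact he i ▸ Real.sqrt_nonneg _

theorem exists_svd_sortedSingularValues {n : ℕ} (A : Matrix (Fin n) (Fin n) ℂ) :
    ∃ W ∈ unitaryGroup (Fin n) ℂ, ∃ Q ∈ unitaryGroup (Fin n) ℂ,
      A = W * (diagonal fun i => (sortedSingularValues A i : ℂ)) * Qᴴ := by
  have hA := isHermitian_conjTranspose_mul_self A
  obtain ⟨e, he⟩ := exists_perm_sortedSingularValues_eq A
  obtain ⟨Q, hQ, hAQ⟩ := hA.exists_mem_unitaryGroup_conj_eq_diagonal_comp e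
  have hsq (i : Fin n) : sortedSingularValues A i ^ 2 = hA.eigenvalues (e i) := by
    rw [he, Real.sq_sqrt]
    open scoped ComplexOrder in
    exact (posSemidef_conjTranspose_mul_self A).eigenvalues_nonneg _
  obtain ⟨W, hW, hAW⟩ := exists_mem_unitaryGroup_eq_mul_diagonal_mul_conjTranspose hQ
    (sortedSingularValues A) (by rw [hAQ]; simp [← hsq])
  exact ⟨W, hW, Q, hQ, hAW⟩

theorem fromBlocks_shift_mem_unitaryGroup {𝕜 : Type*} [RCLike 𝕜] {n r : ℕ} (d : Fin n → ℝ)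
    (hd₁ : ∀ i : Fin n, (i : ℕ) < r → d i = 1) (hd : ∀ i, |d i| ≤ 1) :
    let C : Fin (n - r) → ℝ := fun j => d ⟨r + j, by omega⟩
    let S : Fin (n - r) → ℝ := fun j => √(1 - C j ^ 2)
    fromBlocks (diagonal fun i => (d i : 𝕜))
      (of fun (i : Fin n) (j : Fin (n - r)) => if (i : ℕ) = r + (j : ℕ) then (-(S j) : 𝕜) else 0)
      (of fun (j : Fin (n - r)) (i : Fin n) => if (i : ℕ) = r + (j : ℕ) then (S j : 𝕜) else 0)
      (diagonal fun j => (C j : 𝕜)) ∈ unitaryGroup (Fin n ⊕ Fin (n - r)) 𝕜 := by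
  intro C S
  let φ : Fin (n - r) → Fin n := fun j => ⟨r + j, by omega⟩
  have hφ : Function.Injective φ := fun j j' h => Fin.ext (by simpa [φ] using h)
  have hN : (of fun (i : Fin n) (j : Fin (n - r)) =>
      if (i : ℕ) = r + (j : ℕ) then (-(S j) : 𝕜) else 0) =
      -(embeddingMatrix 𝕜 φ * diagonal fun j => (S j : 𝕜)) := by
    ext i j
    simp [mul_diagonal, embeddingMatrix_apply, φ, Fin.ext_iff]
    split_ifs <;> simp
  have hP : (of fun (j : Fin (n - r)) (i : Fin n) =>
      if (i : ℕ) = r + (j : ℕ) then (S j : 𝕜) else 0) =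
      (diagonal fun j => (S j : 𝕜)) * (embeddingMatrix 𝕜 φ)ᴴ := by
    ext j i
    simp [diagonal_mul, embeddingMatrix_apply, φ, Fin.ext_iff]
  rw [hN, hP]
  refine fromBlocks_cs_mem_unitaryGroup hφ d S (fun i hi => hd₁ i ?_) (fun j => ?_)
  · by_contra! hri
    exact hi ⟨⟨i - r, by omega⟩, Fin.ext (by simp [φ]; omega)⟩
  · have : C j ^ 2 ≤ 1 := sq_le_one_iff_abs_le_one _ |>.mpr (hd _)
    simp only [S, Real.sq_sqrt (sub_nonneg.mpr this)]
    ring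

/-- A contraction with exactly `n - r` singular values strictly less than `1`
admits a singular value decomposition `A = W · diag(σ) · Qᴴ` with `W, Q`
unitary, and a minimal unitary dilation of size `(2n - r) × (2n - r)` of the
explicit CS-decomposition block form. -/
theorem minimal_dilation_explicit_form
    (n r : ℕ) (A : Matrix (Fin n) (Fin n) ℂ)
    (σ : Fin n → ℝ) (hσ : σ = sortedSingularValues A)
    (h1 : ∀ i : Fin n, (i : ℕ) < r → σ i = 1)
    (h2 : ∀ i : Fin n, r ≤ (i : ℕ) → σ i < 1) :
    ∃ W Q : Matrix (Fin n) (Fin n) ℂ,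
      W ∈ Matrix.unitaryGroup (Fin n) ℂ ∧ Q ∈ Matrix.unitaryGroup (Fin n) ℂ ∧
      A = W * Matrix.diagonal (fun i => (σ i : ℂ)) * Qᴴ ∧
      ∃ W₂ Q₂ : Matrix (Fin (n - r)) (Fin (n - r)) ℂ,
        W₂ ∈ Matrix.unitaryGroup (Fin (n - r)) ℂ ∧
        Q₂ ∈ Matrix.unitaryGroup (Fin (n - r)) ℂ ∧
        (let C : Fin (n - r) → ℝ := fun j => σ ⟨r + j, by have := j.isLt; omega⟩
         let Sm : Fin (n - r) → ℝ := fun j => Real.sqrt (1 - C j ^ 2)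
         let M : Matrix (Fin n ⊕ Fin (n - r)) (Fin n ⊕ Fin (n - r)) ℂ :=
           fromBlocks (Matrix.diagonal fun i => (σ i : ℂ))
             (Matrix.of fun i j => if (i : ℕ) = r + (j : ℕ) then (-(Sm j) : ℂ) else 0)
             (Matrix.of fun j i => if (i : ℕ) = r + (j : ℕ) then ((Sm j : ℝ) : ℂ) else 0)
             (Matrix.diagonal fun j => (C j : ℂ))
         let Udil := fromBlocks W 0 0 W₂ * M * fromBlocks Qᴴ 0 0 Q₂ᴴ
         Udil ∈ Matrix.unitaryGroup (Fin n ⊕ Fin (n - r)) ℂ ∧ Udil.toBlocks₁₁ = A) := by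
  subst hσ
  obtain ⟨W, hW, Q, hQ, hA⟩ := exists_svd_sortedSingularValues A
  have hσ_le (i : Fin n) : |sortedSingularValues A i| ≤ 1 := by
    rw [abs_of_nonneg (sortedSingularValues_nonneg A i)]
    rcases lt_or_ge (i : ℕ) r with hi | hi
    · exact (h1 i hi).le
    · exact (h2 i hi).le
  refine ⟨W, Q, hW, hQ, hA, 1, 1, one_mem _, one_mem _, ?_, ?_⟩
  · exact mul_mem (mul_mem (fromBlocks_zero_zero_mem_unitaryGroup hW (one_mem _))
      (fromBlocks_shift_mem_unitaryGroup _ h1 hσ_le))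
      (fromBlocks_zero_zero_mem_unitaryGroup (Unitary.star_mem hQ) (Unitary.star_mem (one_mem _)))
  · rw [toBlocks₁₁_fromBlocks_mul_mul_fromBlocks, toBlocks_fromBlocks₁₁]
    exact hA.symm
end
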